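/- Let D be a dendriform dialgebra over a field k and T(D) the nonunitary tensor algebra on the vector space D. Let J_R be the Rota-Baxter ideal of Ш⁰(T(D)) (weight λ) generated by { x≺y − x⌊y⌋ − λ x⊗y, x≻y − ⌊x⌋y : x, y ∈ D }. Then Ш⁰(T(D))/J_R, with ρ = π ∘ i_D, is the universal enveloping Rota-Baxter algebra of weight λ of D: for every nonunitary Rota-Baxter algebra (A,R) of weight λ and every dendriform dialgebra morphism f: D → (A, ≺'_R, ≻'_R), there is a unique Rota-Baxter homomorphism f̂: Ш⁰(T(D))/J_R → A with f̂ ∘ ρ = f. -/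
import Mathlib


/-- The Rota-Baxter ideal of a nonunitary `k`-algebra `Sh` generated by a set
`S`: the smallest subset containing `S` that is a two-sided ideal (closed
under addition, negation, scalar multiplication and multiplication by
arbitrary elements on both sides) and closed under the operator `Rop`. -/
def RBIdealGen (k : Type*) {Sh : Type*} [CommRing k] [NonUnitalRing Sh]
    [Module k Sh] (Rop : Sh → Sh) (S : Set Sh) : Set Sh :=
  ⋂₀ {I : Set Sh |
    (0 : Sh) ∈ I ∧ (∀ a ∈ I, ∀ b ∈ I, a + b ∈ I) ∧ (∀ a ∈ I, -a ∈ I) ∧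
    (∀ c : k, ∀ a ∈ I, c • a ∈ I) ∧
    (∀ a : Sh, ∀ b ∈ I, a * b ∈ I) ∧ (∀ a ∈ I, ∀ b : Sh, a * b ∈ I) ∧
    (∀ a ∈ I, Rop a ∈ I) ∧ S ⊆ I}

/-- Let `(D, ≺, ≻)` (here `p`, `s`) be a dendriform dialgebra over a field
`k`, and let `Sh = Ш⁰(T(D))` be the free nonunitary Rota-Baxter algebra of
weight `λ` over the vector space `D` (via the nonunitary tensor algebra
`T(D)`), expressed by its universal property via `iD`. Note that the element
`x ⊗ y ∈ T(D) ⊆ Sh` is the product `iD x * iD y` in `Sh`. Let `J_R` be the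
Rota-Baxter ideal of `Sh` generated by
`{x≺y − x⌊y⌋ − λ x⊗y, x≻y − ⌊x⌋y}`, and `Q = Sh/J_R` the quotient (expressed
as a surjective Rota-Baxter morphism `π : Sh → Q` with kernel `J_R`). Then
`Q`, with `ρ = π ∘ iD`, is the universal enveloping Rota-Baxter algebra of
weight `λ` of `D`. -/
theorem stmt_16.{u} {k D Sh Q : Type u} [Field k]
    [AddCommGroup D] [Module k D]
    [NonUnitalRing Sh] [Module k Sh] [SMulCommClass k Sh Sh] [IsScalarTower k Sh Sh]
    [NonUnitalRing Q] [Module k Q] [SMulCommClass k Q Q] [IsScalarTower k Q Q]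
    (lam : k)
    (p s : D →ₗ[k] D →ₗ[k] D)
    -- the three dendriform dialgebra axioms
    (h1 : ∀ x y z : D, p (p x y) z = p x (p y z + s y z))
    (h2 : ∀ x y z : D, p (s x y) z = s x (p y z))
    (h3 : ∀ x y z : D, s (p x y + s x y) z = s x (s y z))
    -- `Sh` is a Rota-Baxter algebra of weight `λ`
    (Rsh : Sh →ₗ[k] Sh)
    (hRsh : ∀ a c : Sh, Rsh a * Rsh c = Rsh (Rsh a * c + a * Rsh c + lam • (a * c)))
    -- `iD : D → Sh` exhibits `Sh` as the free nonunitary Rota-Baxter algebra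
    -- of weight `λ` over the vector space `D`
    (iD : D →ₗ[k] Sh)
    (hfree : ∀ (A : Type u) [NonUnitalRing A] [Module k A] [SMulCommClass k A A]
      [IsScalarTower k A A], ∀ R : A →ₗ[k] A,
      (∀ a c : A, R a * R c = R (R a * c + a * R c + lam • (a * c))) →
      ∀ f : D →ₗ[k] A,
      ∃! g : Sh →ₙₐ[k] A, (∀ a : Sh, g (Rsh a) = R (g a)) ∧ ∀ x : D, g (iD x) = f x)
    -- `Q` is a Rota-Baxter algebra of weight `λ` and `π : Sh → Q` is a
    -- surjective Rota-Baxter morphism with kernel the Rota-Baxter ideal `J_R`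
    (RQ : Q →ₗ[k] Q)
    (hRQ : ∀ a c : Q, RQ a * RQ c = RQ (RQ a * c + a * RQ c + lam • (a * c)))
    (pi : Sh →ₙₐ[k] Q) (hpiR : ∀ a : Sh, pi (Rsh a) = RQ (pi a))
    (hpisurj : Function.Surjective pi)
    (hker : ∀ a : Sh, pi a = 0 ↔
      a ∈ RBIdealGen k Rsh
        ({z : Sh | ∃ x y : D, z = iD (p x y) - iD x * Rsh (iD y) - lam • (iD x * iD y)} ∪
         {z : Sh | ∃ x y : D, z = iD (s x y) - Rsh (iD x) * iD y})) :
    -- universal property of the enveloping Rota-Baxter algebra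
    ∀ (A : Type u) [NonUnitalRing A] [Module k A] [SMulCommClass k A A]
      [IsScalarTower k A A], ∀ R : A →ₗ[k] A,
      (∀ a c : A, R a * R c = R (R a * c + a * R c + lam • (a * c))) →
      ∀ f : D →ₗ[k] A,
      (∀ x y : D, f (p x y) = f x * R (f y) + lam • (f x * f y)) →
      (∀ x y : D, f (s x y) = R (f x) * f y) →
      ∃! g : Q →ₙₐ[k] A, (∀ q : Q, g (RQ q) = R (g q)) ∧ ∀ x : D, g (pi (iD x)) = f x := by
  intro A _ _ _ _ R hR f hfp hfs
  obtain ⟨g0, ⟨hg0R, hg0i⟩, hg0un⟩ := hfree A R hR f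
  -- g0 kills the kernel of pi
  have hkill : ∀ a : Sh, pi a = 0 → g0 a = 0 := by
    intro a ha
    have hmem := (hker a).mp ha
    refine Set.mem_sInter.mp hmem {b : Sh | g0 b = 0} ?_
    refine ⟨map_zero g0, ?_, ?_, ?_, ?_, ?_, ?_, ?_⟩
    · intro a ha b hb; simp only [Set.mem_setOf_eq] at *; rw [map_add, ha, hb, add_zero]
    · intro a ha; simp only [Set.mem_setOf_eq] at *; rw [map_neg, ha, neg_zero]
    · intro c a ha; simp only [Set.mem_setOf_eq] at *; rw [map_smul, ha, smul_zero]
    · intro a b hb; simp only [Set.mem_setOf_eq] at *; rw [map_mul, hb, mul_zero]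
    · intro a ha b; simp only [Set.mem_setOf_eq] at *; rw [map_mul, ha, zero_mul]
    · intro a ha; simp only [Set.mem_setOf_eq] at *; rw [hg0R, ha, map_zero]
    · rintro z (⟨x, y, rfl⟩ | ⟨x, y, rfl⟩) <;> simp only [Set.mem_setOf_eq]
      · simp only [map_sub, map_mul, map_smul, hg0R, hg0i, hfp x y]
        abel
      · simp only [map_sub, map_mul, hg0R, hg0i, hfs x y, sub_self]
  have heq : ∀ a b : Sh, pi a = pi b → g0 a = g0 b := by
    intro a b hab
    have : g0 (a - b) = 0 := hkill _ (by rw [map_sub, hab, sub_self])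
    rw [map_sub, sub_eq_zero] at this; exact this
  -- section of pi
  set σ : Q → Sh := Function.surjInv hpisurj with hσdef
  have hσ : ∀ q : Q, pi (σ q) = q := Function.surjInv_eq hpisurj
  set gfun : Q → A := fun q => g0 (σ q) with hgfun
  have hcomp : ∀ a : Sh, gfun (pi a) = g0 a := fun a => heq _ _ (hσ _)
  have hsm : ∀ (c : k) (q : Q), gfun (c • q) = c • gfun q := by
    intro c q
    obtain ⟨a, rfl⟩ := hpisurj q
    rw [← map_smul pi, hcomp, hcomp, map_smul]
  have hz : gfun 0 = 0 := by
    rw [show (0 : Q) = pi 0 from (map_zero pi).symm, hcomp, map_zero]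
  have had : ∀ q r : Q, gfun (q + r) = gfun q + gfun r := by
    intro q r
    obtain ⟨a, rfl⟩ := hpisurj q; obtain ⟨b, rfl⟩ := hpisurj r
    rw [← map_add pi, hcomp, hcomp, hcomp, map_add]
  have hm : ∀ q r : Q, gfun (q * r) = gfun q * gfun r := by
    intro q r
    obtain ⟨a, rfl⟩ := hpisurj q; obtain ⟨b, rfl⟩ := hpisurj r
    rw [← map_mul pi, hcomp, hcomp, hcomp, map_mul]
  refine ⟨{ toFun := gfun, map_smul' := fun c q => by simpa using hsm c q,
            map_zero' := hz, map_add' := had, map_mul' := hm }, ⟨?_, ?_⟩, ?_⟩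
  · intro q
    obtain ⟨a, rfl⟩ := hpisurj q
    show gfun (RQ (pi a)) = R (gfun (pi a))
    rw [← hpiR, hcomp, hcomp, hg0R]
  · intro x
    show gfun (pi (iD x)) = f x
    rw [hcomp, hg0i]
  · intro g' ⟨hg'R, hg'i⟩
    have hcompeq : g'.comp pi = g0 := by
      refine hg0un (g'.comp pi) ⟨fun a => ?_, fun x => hg'i x⟩
      simp only [NonUnitalAlgHom.comp_apply, hpiR, hg'R]
    ext q
    obtain ⟨a, rfl⟩ := hpisurj q
    show g' (pi a) = gfun (pi a)
    rw [hcomp, ← hcompeq]; rfl
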